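/- For any integer d ≥ 2 and any γ > 0 there are positive reals δ₀ = δ₀(d, γ), R₁ = R₁(d, γ) and a positive integer L₀ = L₀(d, γ) such that the following holds. Let X be a random vector in ℝ^d and let [X] be obtained by rounding each component of X to the nearest integer. Let q = sup over unit vectors e ∈ ℝ^d of Q(⟨e, X⟩, 1), where Q(Y, t) := sup_{x ∈ ℝ} P(Y ∈ (x, x + t)). Let R₀ > 0 and suppose that on the open ball {x : ‖x‖ < R₀} the random vector X has a positive differentiable density f with sup_{‖x‖ < R₀} ‖∇ ln f(x)‖ ≤ δ₀. Then for any vector a ∈ ℝ^d, either max_{x ∈ ℤ} P(⟨a, [X]⟩ = x) ≤ γq + P(‖X‖ ≥ R₀ − R₁), or there exists κ ∈ ℝ, κ ≠ 0, with κa ∈ {−L₀, …, L₀}^d. -/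

import Mathlib

/-!
If `a` is not proportional to a small integer vector, Dirichlet's approximation theorem gives an
integer vector `v` with `|vᵢ| ≤ Q` and `0 < ⟪a, v⟫ ≤ ‖a‖ / Q`. Translating a level set
`T = {y : ⟨a, [y]⟩ = x}` (cut down to a ball) by `k v`, `k = 0, …, N`, moves it to the level
`x + k ⟪a, v⟫`, so the events `X ∈ T + k v` are disjoint. Along `k v`, with `‖k v‖ < R₁`,
`log f` varies by at most `δ₀ R₁ = log 2`, so each of these events has at least half the
probability of `X ∈ T`. With `Q = 2N` they all lie in one slab of width `d + 1/2` orthogonal to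
`a`, which `2d + 2` unit slabs cover. Hence `(N + 1) P(X ∈ T) ≤ 2 (2d + 2) q ≤ (N + 1) γ q` once
`N ≥ 2 (2d + 2) / γ`.
-/

open scoped RealInnerProductSpace
open Finset Function MeasureTheory Metric Real

section Dirichlet

variable {ι : Type*} [Fintype ι]

/-- Dirichlet's approximation theorem for `b / c`, cleared of denominators. -/
theorem exists_int_abs_le_abs_mul_sub_mul_le {b c : ℝ} (hbc : |b| ≤ |c|) {n : ℕ} (hn : 0 < n) :
    ∃ p q : ℤ, 0 < q ∧ q ≤ n ∧ |p| ≤ q ∧ |q * b - p * c| ≤ |c| / (n + 1) := by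
  rcases eq_or_ne c 0 with rfl | hc
  · refine ⟨0, 1, one_pos, by exact_mod_cast hn, by simp, ?_⟩
    simp_all
  obtain ⟨p, q, hq, hqn, hpq⟩ := Real.exists_int_int_abs_mul_sub_le (b / c) hn
  have hc' : 0 < |c| := abs_pos.mpr hc
  refine ⟨p, q, hq, hqn, ?_, ?_⟩
  · have hqbc : |q * (b / c)| ≤ q := by
      rw [abs_mul, abs_div, abs_of_pos (Int.cast_pos.mpr hq)]
      exact mul_le_of_le_one_right (by positivity) (div_le_one_of_le₀ hbc (abs_nonneg c))
    have hlt : 1 / ((n : ℝ) + 1) < 1 := by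
      rw [div_lt_one (by positivity)]; linarith [(Nat.cast_pos.mpr hn : (0 : ℝ) < n)]
    have : (|p| : ℝ) < q + 1 := by
      linarith [abs_sub_abs_le_abs_sub (p : ℝ) (q * (b / c)), abs_sub_comm (p : ℝ) (q * (b / c))]
    exact Int.lt_add_one_iff.mp (by exact_mod_cast this)
  · calc |q * b - p * c| = |c| * |q * (b / c) - p| := by
          rw [← abs_mul]; congr 1; field_simp
      _ ≤ |c| * (1 / (n + 1)) := mul_le_mul_of_nonneg_left hpq hc'.le
      _ = |c| / (n + 1) := mul_one_div _ _

theorem exists_smul_eq_int_of_mul_eq {a : ι → ℝ} {j : ι} (haj : a j ≠ 0) {p q : ι → ℤ} {B : ℕ}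
    (hq : ∀ i, 0 < q i) (hqB : ∀ i, q i ≤ B) (hpq : ∀ i, |p i| ≤ q i)
    (hprop : ∀ i, (q i : ℝ) * a i = p i * a j) :
    ∃ κ : ℝ, κ ≠ 0 ∧ ∀ i, ∃ m : ℤ, |m| ≤ ((B ^ Fintype.card ι : ℕ) : ℤ) ∧ κ * a i = m := by
  classical
  set L := ∏ i, q i
  have hL : L ≤ B ^ Fintype.card ι := by
    calc L ≤ ∏ _i : ι, (B : ℤ) := prod_le_prod (fun i _ => (hq i).le) (fun i _ => hqB i)
      _ = _ := by simp
  refine ⟨L / a j, div_ne_zero (by exact_mod_cast (prod_pos fun i _ => hq i).ne') haj,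
    fun i => ⟨p i * ∏ t ∈ univ.erase i, q t, ?_, ?_⟩⟩
  · have hrest : 0 ≤ ∏ t ∈ univ.erase i, q t := prod_nonneg fun t _ => (hq t).le
    calc |p i * ∏ t ∈ univ.erase i, q t| = |p i| * ∏ t ∈ univ.erase i, q t := by
          rw [abs_mul, abs_of_nonneg hrest]
      _ ≤ q i * ∏ t ∈ univ.erase i, q t := mul_le_mul_of_nonneg_right (hpq i) hrest
      _ = L := mul_prod_erase _ _ (mem_univ i)
      _ ≤ _ := by exact_mod_cast hL
  · have hL' : (L : ℝ) = q i * ∏ t ∈ univ.erase i, (q t : ℝ) := by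
      exact_mod_cast (mul_prod_erase univ q (mem_univ i)).symm
    rw [hL']
    push_cast
    field_simp
    linear_combination (∏ t ∈ univ.erase i, (q t : ℝ)) * hprop i

theorem exists_int_sum_mul_pos_le_of_ne {a : ι → ℝ} {i j : ι} (hij : i ≠ j) {p q : ℤ} {Q : ℕ}
    (hq : 0 < q) (hqQ : q ≤ Q) (hpq : |p| ≤ q) (hs : q * a i - p * a j ≠ 0) {B : ℝ}
    (hB : |q * a i - p * a j| ≤ B) :
    ∃ u : ι → ℤ, (∀ t, |u t| ≤ Q) ∧ 0 < ∑ t, a t * u t ∧ ∑ t, a t * u t ≤ B := by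
  classical
  set u : ι → ℤ := Pi.single i q - Pi.single j p with hu
  have hsum : ∑ t, a t * u t = q * a i - p * a j := by
    simp [hu, Pi.single_apply, mul_sub, sum_sub_distrib, mul_comm]
  have hub : ∀ t, |u t| ≤ Q := by
    intro t
    by_cases hti : t = i
    · subst hti; simp [hu, hij, abs_of_pos hq, hqQ]
    by_cases htj : t = j
    · subst htj; simpa [hu, hti] using hpq.trans hqQ
    · simp [hu, hti, htj]
  rcases hs.lt_or_gt with hneg | hpos
  · refine ⟨-u, fun t => by simpa using hub t, ?_, ?_⟩ <;>
      simp only [Pi.neg_apply, Int.cast_neg, mul_neg, sum_neg_distrib, hsum]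
    · linarith
    · rwa [abs_of_neg hneg] at hB
  · exact ⟨u, hub, hsum ▸ hpos, by rwa [hsum, ← abs_of_pos hpos]⟩

/-- Approximate every `a i / a j`, with `|a j|` maximal: either all the approximations are exact,
or an inexact one is a small integer combination of `a i` and `a j`. -/
theorem exists_int_sum_mul_pos_le_or_exists_smul_eq_int (a : ι → ℝ) {Q : ℕ} (hQ : 0 < Q) :
    (∃ u : ι → ℤ, (∀ i, |u i| ≤ Q) ∧ 0 < ∑ i, a i * u i ∧ ∑ i, a i * u i ≤ ‖a‖ / Q) ∨
      ∃ κ : ℝ, κ ≠ 0 ∧ ∀ i, ∃ m : ℤ, |m| ≤ ((Q ^ Fintype.card ι : ℕ) : ℤ) ∧ κ * a i = m := by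
  rcases eq_or_ne a 0 with rfl | ha
  · exact Or.inr ⟨1, one_ne_zero, fun i => ⟨0, by simp, by simp⟩⟩
  obtain ⟨i₀, hi₀⟩ := Function.ne_iff.mp ha
  obtain ⟨j, -, hj⟩ := exists_max_image univ (fun i => |a i|) ⟨i₀, mem_univ i₀⟩
  have haj : a j ≠ 0 := fun h => hi₀ (abs_nonpos_iff.mp (by simpa [h] using hj i₀ (mem_univ _)))
  choose p q hq hqQ hpq happrox using
    fun i => exists_int_abs_le_abs_mul_sub_mul_le (hj i (mem_univ i)) hQ
  by_cases hprop : ∀ i, (q i : ℝ) * a i = p i * a j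
  · exact Or.inr (exists_smul_eq_int_of_mul_eq haj hq hqQ hpq hprop)
  obtain ⟨i, hi⟩ := not_forall.mp hprop
  have hQ' : (0 : ℝ) < Q := Nat.cast_pos.mpr hQ
  have hij : i ≠ j := by
    rintro rfl
    have h1 : |(q i : ℝ) - p i| < 1 := by
      have : |(q i : ℝ) - p i| * |a i| ≤ 1 / (Q + 1) * |a i| := by
        rw [← abs_mul, sub_mul, one_div_mul_eq_div]; exact happrox i
      exact (le_of_mul_le_mul_right this (abs_pos.mpr haj)).trans_lt
        ((div_lt_one (by linarith)).mpr (by linarith))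
    have : q i = p i := by
      have := Int.abs_lt_one_iff.mp (by exact_mod_cast h1 : |q i - p i| < 1)
      omega
    exact hi (by rw [this])
  refine Or.inl (exists_int_sum_mul_pos_le_of_ne hij (hq i) (hqQ i) (hpq i) (sub_ne_zero.mpr hi)
    ((happrox i).trans ?_))
  exact div_le_div₀ (norm_nonneg a) (norm_le_pi_norm a j) hQ' (by linarith)

theorem EuclideanSpace.norm_le_sqrt_card_mul {v : EuclideanSpace ℝ ι} {B : ℝ} (hB : 0 ≤ B)
    (hv : ∀ i, |v i| ≤ B) : ‖v‖ ≤ √(Fintype.card ι) * B := by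
  rw [EuclideanSpace.norm_eq, ← Real.sqrt_sq hB, ← Real.sqrt_mul (Nat.cast_nonneg _)]
  gcongr
  calc ∑ i, ‖v i‖ ^ 2 ≤ ∑ _i : ι, B ^ 2 :=
        sum_le_sum fun i _ => pow_le_pow_left₀ (norm_nonneg _) (hv i) 2
    _ = Fintype.card ι * B ^ 2 := by simp

theorem EuclideanSpace.exists_inner_pos_le_or_exists_smul_eq_int (a : EuclideanSpace ℝ ι)
    {Q : ℕ} (hQ : 0 < Q) :
    (∃ v : EuclideanSpace ℝ ι, (∀ i, ∃ n : ℤ, v i = n) ∧ ‖v‖ ≤ √(Fintype.card ι) * Q ∧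
        0 < ⟪a, v⟫ ∧ ⟪a, v⟫ ≤ ‖a‖ / Q) ∨
      ∃ κ : ℝ, κ ≠ 0 ∧ ∀ i, ∃ m : ℤ, |m| ≤ ((Q ^ Fintype.card ι : ℕ) : ℤ) ∧ κ * a i = m := by
  refine (exists_int_sum_mul_pos_le_or_exists_smul_eq_int a.ofLp hQ).imp_left ?_
  rintro ⟨u, hu, hpos, hle⟩
  have hav : ⟪a, WithLp.toLp 2 fun i => (u i : ℝ)⟫ = ∑ i, a i * u i := by
    simp [PiLp.inner_apply, mul_comm]
  have ha : ‖a.ofLp‖ ≤ ‖a‖ :=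
    (pi_norm_le_iff_of_nonneg (norm_nonneg a)).mpr fun i => PiLp.norm_apply_le a i
  refine ⟨WithLp.toLp 2 fun i => (u i : ℝ), fun i => ⟨u i, rfl⟩, ?_, hav ▸ hpos, ?_⟩
  · exact EuclideanSpace.norm_le_sqrt_card_mul (Nat.cast_nonneg Q)
      fun i => by simpa using (Int.cast_le (R := ℝ)).mpr (hu i)
  · exact hav ▸ hle.trans (by gcongr)

end Dirichlet

section Rounding

variable {ι : Type*} [Fintype ι]

noncomputable def roundedInner (a y : EuclideanSpace ℝ ι) : ℝ := ∑ i, a i * (round (y i) : ℝ)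

theorem measurable_roundedInner (a : EuclideanSpace ℝ ι) : Measurable (roundedInner a) := by
  have hround : Measurable (round : ℝ → ℤ) := by
    rw [funext round_eq]
    exact (measurable_id.add_const _).floor
  refine Finset.measurable_sum _ fun i _ => (measurable_from_top.comp ?_).const_mul _
  exact hround.comp (measurable_pi_apply i |>.comp (PiLp.continuous_ofLp 2 _).measurable)

theorem roundedInner_add_of_int (a y : EuclideanSpace ℝ ι) {v : EuclideanSpace ℝ ι}
    (hv : ∀ i, ∃ n : ℤ, v i = n) : roundedInner a (y + v) = roundedInner a y + ⟪a, v⟫ := by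
  choose n hn using hv
  simp only [roundedInner, PiLp.inner_apply, PiLp.add_apply, hn, round_add_intCast,
    RCLike.inner_apply, conj_trivial, ← sum_add_distrib]
  refine sum_congr rfl fun i _ => ?_
  push_cast; ring

theorem roundedInner_add_natCast_smul (a y : EuclideanSpace ℝ ι) {v : EuclideanSpace ℝ ι}
    (hv : ∀ i, ∃ n : ℤ, v i = n) (k : ℕ) :
    roundedInner a (y + (k : ℝ) • v) = roundedInner a y + k * ⟪a, v⟫ := by
  refine (roundedInner_add_of_int a y fun i => ?_).trans (by rw [real_inner_smul_right])
  obtain ⟨n, hn⟩ := hv i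
  exact ⟨k * n, by simp [hn]⟩

theorem abs_inner_sub_roundedInner_le (a y : EuclideanSpace ℝ ι) :
    |⟪a, y⟫ - roundedInner a y| ≤ Fintype.card ι * ‖a‖ / 2 := by
  have hterm : ∀ i, |a i * (y i - round (y i))| ≤ ‖a‖ / 2 := fun i => by
    rw [abs_mul, div_eq_mul_one_div]
    exact mul_le_mul (by simpa using PiLp.norm_apply_le a i) (abs_sub_round _)
      (abs_nonneg _) (norm_nonneg _)
  calc |⟪a, y⟫ - roundedInner a y| = |∑ i, a i * (y i - round (y i))| := by
        simp only [roundedInner, PiLp.inner_apply, RCLike.inner_apply, conj_trivial,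
          ← sum_sub_distrib, mul_sub, mul_comm]
    _ ≤ ∑ i, |a i * (y i - round (y i))| := abs_sum_le_sum_abs _ _
    _ ≤ ∑ _i : ι, ‖a‖ / 2 := sum_le_sum fun i _ => hterm i
    _ = Fintype.card ι * ‖a‖ / 2 := by simp [mul_div_assoc]

theorem inner_normalize_mem_Icc_of_roundedInner_eq {a y : EuclideanSpace ℝ ι} (ha : a ≠ 0)
    {x c : ℝ} (hy : roundedInner a y = x + c) (hc₀ : 0 ≤ c) (hc : c ≤ ‖a‖ / 2) :
    ⟪‖a‖⁻¹ • a, y⟫ ∈ Set.Icc (x / ‖a‖ - Fintype.card ι / 2)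
      (x / ‖a‖ - Fintype.card ι / 2 + (Fintype.card ι + 1 / 2)) := by
  have hna : 0 < ‖a‖ := norm_pos_iff.mpr ha
  have h := abs_le.mp (abs_inner_sub_roundedInner_le a y)
  rw [real_inner_smul_left, hy] at *
  constructor
  · rw [inv_mul_eq_div, div_sub' hna.ne', div_le_div_iff_of_pos_right hna]; nlinarith
  · rw [inv_mul_eq_div, div_le_iff₀ hna]
    field_simp
    nlinarith

end Rounding

section LogLipschitz

variable {E : Type*} [NormedAddCommGroup E] [InnerProductSpace ℝ E]

theorem mul_exp_neg_le_of_norm_gradient_log_le [CompleteSpace E] {f : E → ℝ} {s : Set E}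
    {δ : ℝ} (hs : Convex ℝ s) (hpos : ∀ x ∈ s, 0 < f x)
    (hdiff : ∀ x ∈ s, DifferentiableAt ℝ f x)
    (hgrad : ∀ x ∈ s, ‖gradient (fun y => Real.log (f y)) x‖ ≤ δ) {y z : E} (hy : y ∈ s)
    (hz : z ∈ s) : f y * exp (-(δ * ‖z - y‖)) ≤ f z := by
  have hderiv : ∀ x ∈ s, HasFDerivWithinAt (fun y => Real.log (f y))
      (fderiv ℝ (fun y => Real.log (f y)) x) s x := fun x hx =>
    ((hdiff x hx).log (hpos x hx).ne').hasFDerivAt.hasFDerivWithinAt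
  have hbound : ∀ x ∈ s, ‖fderiv ℝ (fun y => Real.log (f y)) x‖ ≤ δ := fun x hx => by
    simpa [gradient] using hgrad x hx
  have hlip := hs.norm_image_sub_le_of_norm_hasFDerivWithin_le hderiv hbound hy hz
  have hlog : Real.log (f y) - δ * ‖z - y‖ ≤ Real.log (f z) := by
    linarith [neg_abs_le (Real.log (f z) - Real.log (f y)), Real.norm_eq_abs _ ▸ hlip]
  calc f y * exp (-(δ * ‖z - y‖)) = exp (Real.log (f y) - δ * ‖z - y‖) := by
        rw [exp_sub, exp_log (hpos y hy), div_eq_mul_inv, exp_neg]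
    _ ≤ exp (Real.log (f z)) := exp_le_exp.mpr hlog
    _ = f z := exp_log (hpos z hz)

variable [FiniteDimensional ℝ E] [MeasurableSpace E] [BorelSpace E] {μ : Measure E}
  [μ.IsAddRightInvariant] [IsFiniteMeasureOnCompacts μ]

theorem exp_neg_mul_setIntegral_le_setIntegral_image_add_right {f : E → ℝ} {R δ : ℝ}
    (hpos : ∀ x, ‖x‖ < R → 0 < f x) (hdiff : ∀ x, ‖x‖ < R → DifferentiableAt ℝ f x)
    (hgrad : ∀ x, ‖x‖ < R → ‖gradient (fun y => Real.log (f y)) x‖ ≤ δ)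
    {T : Set E} (hT : MeasurableSet T) {r : ℝ} (hTr : T ⊆ closedBall 0 r) {w : E}
    (hw : r + ‖w‖ < R) :
    exp (-(δ * ‖w‖)) * ∫ y in T, f y ∂μ ≤ ∫ y in (· + w) '' T, f y ∂μ := by
  have hball : ∀ y ∈ closedBall (0 : E) r, y ∈ ball (0 : E) R ∧ y + w ∈ ball (0 : E) R := by
    intro y hy
    rw [mem_closedBall_zero_iff] at hy
    rw [mem_ball_zero_iff, mem_ball_zero_iff]
    exact ⟨by linarith [norm_nonneg w], (norm_add_le y w).trans_lt (by linarith)⟩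
  have hcont : ContinuousOn (fun y => f (y + w)) (closedBall 0 r) := fun y hy =>
    ((hdiff _ (mem_ball_zero_iff.mp (hball y hy).2)).continuousAt.comp (f := (· + w))
      (continuous_add_const w).continuousAt).continuousWithinAt
  have hint : IntegrableOn (fun y => f (y + w)) T μ :=
    (hcont.integrableOn_compact (isCompact_closedBall 0 r)).mono_set hTr
  rw [(measurePreserving_add_right μ w).setIntegral_image_emb
    (MeasurableEquiv.addRight w).measurableEmbedding, ← integral_const_mul]
  refine integral_mono_of_nonneg ?_ hint ?_
  · refine (ae_restrict_iff' hT).mpr (Filter.Eventually.of_forall fun y hy => ?_)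
    exact mul_nonneg (exp_pos _).le (hpos y (mem_ball_zero_iff.mp (hball y (hTr hy)).1)).le
  · refine (ae_restrict_iff' hT).mpr (Filter.Eventually.of_forall fun y hy => ?_)
    obtain ⟨hy₁, hy₂⟩ := hball y (hTr hy)
    have := mul_exp_neg_le_of_norm_gradient_log_le (convex_ball 0 R)
      (fun x hx => hpos x (mem_ball_zero_iff.mp hx)) (fun x hx => hdiff x (mem_ball_zero_iff.mp hx))
      (fun x hx => hgrad x (mem_ball_zero_iff.mp hx)) hy₁ hy₂
    rwa [add_sub_cancel_left, mul_comm] at this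

theorem measureReal_le_two_mul_measureReal_image_add_right {Ω : Type*} [MeasurableSpace Ω]
    {P : Measure Ω} {X : Ω → E} {f : E → ℝ} {R δ : ℝ}
    (hPf : ∀ A, MeasurableSet A → A ⊆ ball 0 R → P.real (X ⁻¹' A) = ∫ y in A, f y ∂μ)
    (hpos : ∀ x, ‖x‖ < R → 0 < f x) (hdiff : ∀ x, ‖x‖ < R → DifferentiableAt ℝ f x)
    (hgrad : ∀ x, ‖x‖ < R → ‖gradient (fun y => Real.log (f y)) x‖ ≤ δ)
    {T : Set E} (hT : MeasurableSet T) {r : ℝ} (hTr : T ⊆ closedBall 0 r) {w : E}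
    (hw : r + ‖w‖ < R) (hδw : δ * ‖w‖ ≤ Real.log 2) :
    P.real (X ⁻¹' T) ≤ 2 * P.real (X ⁻¹' ((· + w) '' T)) := by
  have hTR : T ⊆ ball 0 R := fun y hy => mem_ball_zero_iff.mpr <| by
    linarith [mem_closedBall_zero_iff.mp (hTr hy), norm_nonneg w]
  have hTw : (· + w) '' T ⊆ ball 0 R := by
    rintro _ ⟨y, hy, rfl⟩
    exact mem_ball_zero_iff.mpr <|
      (norm_add_le y w).trans_lt (by linarith [mem_closedBall_zero_iff.mp (hTr hy)])
  have hTw_meas : MeasurableSet ((· + w) '' T) := by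
    rw [Set.image_add_right]; exact measurable_add_const _ hT
  have hexp : 1 / 2 ≤ exp (-(δ * ‖w‖)) := by
    rw [← exp_log (show (0 : ℝ) < 1 / 2 by norm_num), one_div, Real.log_inv]
    exact exp_le_exp.mpr (neg_le_neg hδw)
  have hI : 0 ≤ ∫ y in T, f y ∂μ :=
    setIntegral_nonneg hT fun y hy => (hpos y (mem_ball_zero_iff.mp (hTR hy))).le
  have hshift := exp_neg_mul_setIntegral_le_setIntegral_image_add_right (μ := μ)
    hpos hdiff hgrad hT hTr hw
  rw [hPf T hT hTR, hPf _ hTw_meas hTw]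
  nlinarith

end LogLipschitz

section Concentration

variable {Ω E : Type*} [MeasurableSpace Ω] [NormedAddCommGroup E] [InnerProductSpace ℝ E]

/-- The `q` of the statement. -/
noncomputable def slabConcentration (P : Measure Ω) (X : Ω → E) : ℝ :=
  sSup {p : ℝ | ∃ (e : E) (t : ℝ), ‖e‖ = 1 ∧ p = (P {ω : Ω | ⟪e, X ω⟫ ∈ Set.Ioo t (t + 1)}).toReal}

theorem slabConcentration_nonneg (P : Measure Ω) (X : Ω → E) : 0 ≤ slabConcentration P X :=
  Real.sSup_nonneg fun _ ⟨_, _, _, hp⟩ => hp ▸ ENNReal.toReal_nonneg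

theorem measureReal_inner_mem_Ioo_le_slabConcentration {P : Measure Ω} [IsFiniteMeasure P]
    (X : Ω → E) {e : E} (he : ‖e‖ = 1) (t : ℝ) :
    P.real {ω | ⟪e, X ω⟫ ∈ Set.Ioo t (t + 1)} ≤ slabConcentration P X :=
  le_csSup ⟨P.real Set.univ, fun _ ⟨_, _, _, hp⟩ => hp ▸ measureReal_mono (Set.subset_univ _)⟩
    ⟨e, t, he, rfl⟩

theorem Icc_subset_biUnion_Ioo {t ℓ : ℝ} {K : ℕ} (hK : 2 * ℓ < K) :
    Set.Icc t (t + ℓ) ⊆ ⋃ m ∈ range K, Set.Ioo (t - 1 / 4 + m / 2) (t - 1 / 4 + m / 2 + 1) := by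
  intro y ⟨hy₁, hy₂⟩
  have hm₁ : (⌊2 * (y - t)⌋₊ : ℝ) ≤ 2 * (y - t) := Nat.floor_le (by linarith)
  have hm₂ : 2 * (y - t) < ⌊2 * (y - t)⌋₊ + 1 := Nat.lt_floor_add_one _
  have hmK : (⌊2 * (y - t)⌋₊ : ℝ) < K := by linarith
  simp only [Set.mem_iUnion, Set.mem_Ioo, mem_range]
  exact ⟨⌊2 * (y - t)⌋₊, by exact_mod_cast hmK, by linarith, by linarith⟩

theorem measureReal_inner_mem_Icc_le {P : Measure Ω} [IsFiniteMeasure P] (X : Ω → E) {e : E}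
    (he : ‖e‖ = 1) (t : ℝ) {ℓ : ℝ} {K : ℕ} (hK : 2 * ℓ < K) :
    P.real {ω | ⟪e, X ω⟫ ∈ Set.Icc t (t + ℓ)} ≤ K * slabConcentration P X := by
  set c : ℕ → ℝ := fun m => t - 1 / 4 + m / 2
  calc P.real {ω | ⟪e, X ω⟫ ∈ Set.Icc t (t + ℓ)}
      ≤ P.real (⋃ m ∈ range K, {ω | ⟪e, X ω⟫ ∈ Set.Ioo (c m) (c m + 1)}) := by
        refine measureReal_mono (fun ω hω => ?_) (measure_ne_top P _)
        simpa [c] using Icc_subset_biUnion_Ioo hK hω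
    _ ≤ ∑ m ∈ range K, P.real {ω | ⟪e, X ω⟫ ∈ Set.Ioo (c m) (c m + 1)} :=
        measureReal_biUnion_finset_le _ _
    _ ≤ ∑ _m ∈ range K, slabConcentration P X :=
        sum_le_sum fun m _ => measureReal_inner_mem_Ioo_le_slabConcentration X he _
    _ = K * slabConcentration P X := by simp

theorem succ_mul_measureReal_le_of_pairwise_disjoint {P : Measure Ω} [IsFiniteMeasure P]
    {S : ℕ → Set Ω} {B : Set Ω} {N : ℕ} (hS : ∀ k, MeasurableSet (S k))
    (hdisj : Pairwise (Disjoint on S)) (hB : ∀ k ≤ N, S k ⊆ B)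
    (hhalf : ∀ k ≤ N, P.real (S 0) ≤ 2 * P.real (S k)) :
    (N + 1) * P.real (S 0) ≤ 2 * P.real B := by
  have hle : ∀ k ∈ range (N + 1), k ≤ N := fun k hk => Nat.lt_succ_iff.mp (mem_range.mp hk)
  calc (N + 1) * P.real (S 0) = ∑ _k ∈ range (N + 1), P.real (S 0) := by simp
    _ ≤ ∑ k ∈ range (N + 1), 2 * P.real (S k) := sum_le_sum fun k hk => hhalf k (hle k hk)
    _ = 2 * P.real (⋃ k ∈ range (N + 1), S k) := by
        rw [measureReal_biUnion_finset (hdisj.set_pairwise _) fun k _ => hS k, mul_sum]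
    _ ≤ 2 * P.real B := by
        gcongr 2 * ?_
        exact measureReal_mono (Set.iUnion₂_subset fun k hk => hB k (hle k hk))
          (measure_ne_top P _)

end Concentration

section Translates

variable {ι Ω : Type*} [Fintype ι] [MeasurableSpace Ω] {P : Measure Ω} [IsFiniteMeasure P]
  {X : Ω → EuclideanSpace ℝ ι} {f : EuclideanSpace ℝ ι → ℝ} {R δ : ℝ}

theorem succ_mul_measureReal_le_slabConcentration (hX : Measurable X)
    (hPf : ∀ A, MeasurableSet A → A ⊆ ball 0 R → P.real (X ⁻¹' A) = ∫ y in A, f y)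
    (hpos : ∀ x, ‖x‖ < R → 0 < f x) (hdiff : ∀ x, ‖x‖ < R → DifferentiableAt ℝ f x)
    (hgrad : ∀ x, ‖x‖ < R → ‖gradient (fun y => Real.log (f y)) x‖ ≤ δ) (hδ : 0 ≤ δ)
    {a v : EuclideanSpace ℝ ι} (hv : ∀ i, ∃ n : ℤ, v i = n) {N : ℕ} (hav : 0 < ⟪a, v⟫)
    (hNav : N * ⟪a, v⟫ ≤ ‖a‖ / 2) (hδv : δ * (N * ‖v‖) ≤ Real.log 2)
    {T : Set (EuclideanSpace ℝ ι)} (hT : MeasurableSet T) {r x : ℝ} (hTr : T ⊆ closedBall 0 r)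
    (hrR : r + N * ‖v‖ < R) (hTx : ∀ y ∈ T, roundedInner a y = x) :
    (N + 1) * P.real (X ⁻¹' T) ≤ 2 * (2 * Fintype.card ι + 2) * slabConcentration P X := by
  have ha : a ≠ 0 := by rintro rfl; simp at hav
  set S : ℕ → Set Ω := fun k => X ⁻¹' ((· + (k : ℝ) • v) '' T) with hS
  have hS0 : S 0 = X ⁻¹' T := by simp [hS]
  have hval : ∀ k : ℕ, ∀ ω ∈ S k, roundedInner a (X ω) = x + k * ⟪a, v⟫ := by
    rintro k ω ⟨y, hy, hyω⟩
    rw [← hyω, roundedInner_add_natCast_smul a y hv, hTx y hy]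
  have hdisj : Pairwise (Disjoint on S) := fun k l hkl =>
    Set.disjoint_left.mpr fun ω hk hl => hkl <| by
      exact_mod_cast mul_right_cancel₀ hav.ne'
        (add_left_cancel ((hval k ω hk).symm.trans (hval l ω hl)))
  have hkv : ∀ k ≤ N, ‖(k : ℝ) • v‖ ≤ N * ‖v‖ := fun k hk => by
    rw [norm_smul, Real.norm_natCast]; gcongr
  have hhalf : ∀ k ≤ N, P.real (S 0) ≤ 2 * P.real (S k) := fun k hk => by
    simpa [hS] using measureReal_le_two_mul_measureReal_image_add_right hPf hpos hdiff hgrad hT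
      hTr (by linarith [hkv k hk]) ((mul_le_mul_of_nonneg_left (hkv k hk) hδ).trans hδv)
  have hslab : ∀ k ≤ N, S k ⊆ {ω | ⟪‖a‖⁻¹ • a, X ω⟫ ∈ Set.Icc (x / ‖a‖ - Fintype.card ι / 2)
      (x / ‖a‖ - Fintype.card ι / 2 + (Fintype.card ι + 1 / 2))} := fun k hk ω hω =>
    inner_normalize_mem_Icc_of_roundedInner_eq ha (hval k ω hω) (by positivity)
      ((mul_le_mul_of_nonneg_right (by exact_mod_cast hk) hav.le).trans hNav)
  have hSk : ∀ k, MeasurableSet (S k) := fun k =>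
    hX (by rw [Set.image_add_right]; exact measurable_add_const _ hT)
  calc (N + 1) * P.real (X ⁻¹' T) ≤ 2 * P.real _ :=
        hS0 ▸ succ_mul_measureReal_le_of_pairwise_disjoint hSk hdisj hslab hhalf
    _ ≤ 2 * ((2 * Fintype.card ι + 2 : ℕ) * slabConcentration P X) := by
        gcongr
        exact measureReal_inner_mem_Icc_le X (norm_smul_inv_norm ha) _ (by push_cast; linarith)
    _ = 2 * (2 * Fintype.card ι + 2) * slabConcentration P X := by push_cast; ring

theorem measureReal_roundedInner_eq_le [IsProbabilityMeasure P] (hX : Measurable X)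
    (hPf : ∀ A, MeasurableSet A → A ⊆ ball 0 R → P.real (X ⁻¹' A) = ∫ y in A, f y)
    (hpos : ∀ x, ‖x‖ < R → 0 < f x) (hdiff : ∀ x, ‖x‖ < R → DifferentiableAt ℝ f x)
    (hgrad : ∀ x, ‖x‖ < R → ‖gradient (fun y => Real.log (f y)) x‖ ≤ δ) (hδ : 0 ≤ δ)
    {a v : EuclideanSpace ℝ ι} (hv : ∀ i, ∃ n : ℤ, v i = n) {N : ℕ} (hav : 0 < ⟪a, v⟫)
    (hNav : N * ⟪a, v⟫ ≤ ‖a‖ / 2) (hδv : δ * (N * ‖v‖) ≤ Real.log 2) {R₁ : ℝ}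
    (hR₁ : N * ‖v‖ < R₁) (x : ℝ) :
    P.real {ω | roundedInner a (X ω) = x} ≤
      2 * (2 * Fintype.card ι + 2) / (N + 1) * slabConcentration P X +
        P.real {ω | R - R₁ ≤ ‖X ω‖} := by
  set T := {y : EuclideanSpace ℝ ι | ‖y‖ < R - R₁ ∧ roundedInner a y = x}
  have hT : MeasurableSet T := (measurableSet_lt measurable_norm measurable_const).inter
    (measurable_roundedInner a (measurableSet_singleton _))
  have hTq := succ_mul_measureReal_le_slabConcentration hX hPf hpos hdiff hgrad hδ hv hav hNav
    hδv hT (fun y hy => mem_closedBall_zero_iff.mpr hy.1.le) (by linarith) fun y hy => hy.2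
  have hsplit : {ω | roundedInner a (X ω) = x} ⊆ X ⁻¹' T ∪ {ω | R - R₁ ≤ ‖X ω‖} := fun ω hω =>
    (lt_or_ge ‖X ω‖ (R - R₁)).imp (fun h => ⟨h, hω⟩) id
  refine (measureReal_mono hsplit (measure_ne_top P _)).trans
    ((measureReal_union_le _ _).trans (add_le_add_left ?_ _))
  rw [div_mul_eq_mul_div, le_div_iff₀ (by positivity), mul_comm]
  exact hTq

end Translates

theorem statement19_general (d : ℕ) (γ : ℝ) (hγ : 0 < γ) :
    ∃ (δ₀ R₁ : ℝ) (L₀ : ℕ), 0 < δ₀ ∧ 0 < R₁ ∧ 0 < L₀ ∧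
      ∀ (Ω : Type) [MeasurableSpace Ω] (P : MeasureTheory.Measure Ω),
        MeasureTheory.IsProbabilityMeasure P →
        ∀ X : Ω → EuclideanSpace ℝ (Fin d), Measurable X →
        ∀ R₀ : ℝ, 0 < R₀ →
        ∀ f : EuclideanSpace ℝ (Fin d) → ℝ,
          (∀ x : EuclideanSpace ℝ (Fin d), ‖x‖ < R₀ → 0 < f x) →
          (∀ x : EuclideanSpace ℝ (Fin d), ‖x‖ < R₀ → DifferentiableAt ℝ f x) →
          (∀ A : Set (EuclideanSpace ℝ (Fin d)), MeasurableSet A →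
            A ⊆ Metric.ball 0 R₀ → (P (X ⁻¹' A)).toReal = ∫ x in A, f x) →
          (∀ x : EuclideanSpace ℝ (Fin d), ‖x‖ < R₀ →
            ‖gradient (fun y => Real.log (f y)) x‖ ≤ δ₀) →
          ∀ a : EuclideanSpace ℝ (Fin d),
            (⨆ x : ℤ,
                (P {ω : Ω | ∑ i, a i * (round (X ω i) : ℝ) = (x : ℝ)}).toReal) ≤
              γ * sSup {p : ℝ | ∃ (e : EuclideanSpace ℝ (Fin d)) (t : ℝ), ‖e‖ = 1 ∧
                  p = (P {ω : Ω | ⟪e, X ω⟫ ∈ Set.Ioo t (t + 1)}).toReal} +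
                (P {ω : Ω | R₀ - R₁ ≤ ‖X ω‖}).toReal ∨
            ∃ κ : ℝ, κ ≠ 0 ∧ ∀ i : Fin d, ∃ m : ℤ, |m| ≤ (L₀ : ℤ) ∧ κ * a i = (m : ℝ) := by
  set N : ℕ := ⌈2 * (2 * d + 2) / γ⌉₊
  have hN : 0 < N := Nat.ceil_pos.mpr (by positivity)
  have hγN : 2 * (2 * d + 2) / (N + 1) ≤ γ := by
    rw [div_le_iff₀ (by positivity)]
    nlinarith [(div_le_iff₀ hγ).mp (Nat.le_ceil (2 * (2 * d + 2) / γ))]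
  set Q : ℕ := 2 * N
  set R₁ : ℝ := N * (√d * Q) + 1
  refine ⟨Real.log 2 / R₁, R₁, Q ^ d, by positivity, by positivity, by positivity, ?_⟩
  intro Ω _ P _ X hX R₀ _ f hfpos hfdiff hPf hgrad a
  rcases EuclideanSpace.exists_inner_pos_le_or_exists_smul_eq_int a (show 0 < Q by omega) with
    ⟨v, hv, hvQ, hav, haQ⟩ | hprop
  · left
    have hNv : N * ‖v‖ < R₁ := by
      have := mul_le_mul_of_nonneg_left hvQ (Nat.cast_nonneg N)
      simp only [Fintype.card_fin] at this
      linarith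
    have hNav : N * ⟪a, v⟫ ≤ ‖a‖ / 2 := by
      calc N * ⟪a, v⟫ ≤ N * (‖a‖ / Q) := by gcongr
        _ = ‖a‖ / 2 := by simp only [Q]; push_cast; field_simp
    have hδv : Real.log 2 / R₁ * (N * ‖v‖) ≤ Real.log 2 := by
      rw [div_mul_eq_mul_div, div_le_iff₀ (by positivity)]
      exact mul_le_mul_of_nonneg_left hNv.le (Real.log_pos one_lt_two).le
    refine ciSup_le fun x => (measureReal_roundedInner_eq_le hX hPf hfpos hfdiff hgrad
      (by positivity) hv hav hNav hδv hNv x).trans ?_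
    simp only [Fintype.card_fin]
    exact add_le_add_left (mul_le_mul_of_nonneg_right hγN (slabConcentration_nonneg P X)) _
  · exact Or.inr (by simpa using hprop)

theorem statement19 (d : ℕ) (hd : 2 ≤ d) (γ : ℝ) (hγ : 0 < γ) :
    ∃ (δ₀ R₁ : ℝ) (L₀ : ℕ), 0 < δ₀ ∧ 0 < R₁ ∧ 0 < L₀ ∧
      ∀ (Ω : Type) [MeasurableSpace Ω] (P : MeasureTheory.Measure Ω),
        MeasureTheory.IsProbabilityMeasure P →
        ∀ X : Ω → EuclideanSpace ℝ (Fin d), Measurable X →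
        ∀ R₀ : ℝ, 0 < R₀ →
        ∀ f : EuclideanSpace ℝ (Fin d) → ℝ,
          (∀ x : EuclideanSpace ℝ (Fin d), ‖x‖ < R₀ → 0 < f x) →
          (∀ x : EuclideanSpace ℝ (Fin d), ‖x‖ < R₀ → DifferentiableAt ℝ f x) →
          (∀ A : Set (EuclideanSpace ℝ (Fin d)), MeasurableSet A →
            A ⊆ Metric.ball 0 R₀ → (P (X ⁻¹' A)).toReal = ∫ x in A, f x) →
          (∀ x : EuclideanSpace ℝ (Fin d), ‖x‖ < R₀ →
            ‖gradient (fun y => Real.log (f y)) x‖ ≤ δ₀) →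
          ∀ a : EuclideanSpace ℝ (Fin d),
            (⨆ x : ℤ,
                (P {ω : Ω | ∑ i, a i * (round (X ω i) : ℝ) = (x : ℝ)}).toReal) ≤
              γ * sSup {p : ℝ | ∃ (e : EuclideanSpace ℝ (Fin d)) (t : ℝ), ‖e‖ = 1 ∧
                  p = (P {ω : Ω | ⟪e, X ω⟫ ∈ Set.Ioo t (t + 1)}).toReal} +
                (P {ω : Ω | R₀ - R₁ ≤ ‖X ω‖}).toReal ∨
            ∃ κ : ℝ, κ ≠ 0 ∧ ∀ i : Fin d, ∃ m : ℤ, |m| ≤ (L₀ : ℤ) ∧ κ * a i = (m : ℝ) :=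
  statement19_general d γ hγ
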